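/- Let S = L ++ M ++ R, where L, M, R are strings. If F(L ++ M) = F(L) ++ F(M), F(M ++ R) = F(M) ++ F(R), and the length of M is at least T (the maximum length of a vocabulary word), then F(S) = F(L) ++ F(M) ++ F(R). (This is the paper's main appendix result: tokenizing the two overlapping chunks L ++ M and M ++ R independently and merging them across the shared middle part M reproduces the tokenization of the full string S.) -/

import Mathlib

/-!
The first token of a string is determined by its first `T` characters. Hence if `L ≠ []` and
`|M| ≥ T`, then `L ++ M ++ R` and `L ++ M` have the same first token, and by `F (L ++ M) = F L ++ F M`
this is also the first token `t` of `L`. Removing `t` leaves the same situation for the rest of `L`,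
so induction on `|L|` reduces to `L = []`, where the claim is `F (M ++ R) = F M ++ F R`.
-/

variable {α : Type*} [DecidableEq α]

/-- The longest nonempty prefix of `S` belonging to the vocabulary `V`
(falling back to the first character of `S` if no such prefix exists). -/
noncomputable def firstTok (V : Finset (List α)) (S : List α) : List α :=
  ((V.filter (fun w => w ≠ [] ∧ w <+: S)).toList.argmax List.length).getD (S.take 1)

lemma firstTok_ne_nil (V : Finset (List α)) (a : α) (s : List α) :
    firstTok V (a :: s) ≠ [] := by
  unfold firstTok
  cases h : ((V.filter (fun w => w ≠ [] ∧ w <+: (a :: s))).toList.argmax List.length) with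
  | none => simp
  | some w =>
    have hw : w ∈ (V.filter (fun w => w ≠ [] ∧ w <+: (a :: s))).toList :=
      List.argmax_mem h
    rw [Finset.mem_toList, Finset.mem_filter] at hw
    simpa using hw.2.1

/-- Greedy (WordPiece-style) tokenization with vocabulary `V`. -/
noncomputable def F (V : Finset (List α)) : List α → List (List α)
  | [] => []
  | a :: s =>
    firstTok V (a :: s) :: F V ((a :: s).drop (firstTok V (a :: s)).length)
termination_by S => S.length
decreasing_by
  have h := firstTok_ne_nil V a s
  have hpos : 0 < (firstTok V (a :: s)).length := List.length_pos_iff.mpr h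
  simp only [List.length_drop, List.length_cons]
  omega

lemma firstTok_prefix (V : Finset (List α)) (S : List α) : firstTok V S <+: S := by
  unfold firstTok
  cases h : (V.filter (fun w => w ≠ [] ∧ w <+: S)).toList.argmax List.length with
  | none => simpa using List.take_prefix 1 S
  | some w =>
    have hw := List.argmax_mem h
    rw [Finset.mem_toList, Finset.mem_filter] at hw
    simpa using hw.2.2

variable {V : Finset (List α)}

lemma firstTok_ne_nil_of_ne_nil {S : List α} (hS : S ≠ []) : firstTok V S ≠ [] := by
  obtain ⟨a, s, rfl⟩ := List.exists_cons_of_ne_nil hS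
  exact firstTok_ne_nil V a s

lemma F_nil : F V [] = [] := by
  rw [F]

lemma F_of_ne_nil {S : List α} (hS : S ≠ []) :
    F V S = firstTok V S :: F V (S.drop (firstTok V S).length) := by
  obtain ⟨a, s, rfl⟩ := List.exists_cons_of_ne_nil hS
  rw [F]

lemma firstTok_append_of_length_le {X : List α} (Y : List α) (hX : X ≠ [])
    (hV : ∀ w ∈ V, w.length ≤ X.length) : firstTok V (X ++ Y) = firstTok V X := by
  have hfilter : V.filter (fun w => w ≠ [] ∧ w <+: X ++ Y)
      = V.filter (fun w => w ≠ [] ∧ w <+: X) := by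
    refine Finset.filter_congr fun w hw => and_congr_right fun _ => ?_
    have := List.prefix_take_iff (xs := w) (ys := X ++ Y) (i := X.length)
    rw [List.take_left] at this
    simpa [hV w hw] using this.symm
  have htake : (X ++ Y).take 1 = X.take 1 :=
    List.take_append_of_le_length (List.length_pos_iff.mpr hX)
  unfold firstTok
  rw [hfilter, htake]

lemma F_append_of_F_append {L M : List α} (hL : L ≠ []) (h : F V (L ++ M) = F V L ++ F V M) :
    firstTok V (L ++ M) = firstTok V L ∧
      F V (L.drop (firstTok V L).length ++ M) = F V (L.drop (firstTok V L).length) ++ F V M := by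
  rw [F_of_ne_nil (List.append_ne_nil_of_left_ne_nil hL M), F_of_ne_nil hL,
    List.cons_append, List.cons.injEq] at h
  obtain ⟨hhead, htail⟩ := h
  rw [hhead, List.drop_append_of_le_length (firstTok_prefix V L).length_le] at htail
  exact ⟨hhead, htail⟩

theorem F_append_append {M R : List α} (hV : ∀ w ∈ V, w.length ≤ M.length)
    (hMR : F V (M ++ R) = F V M ++ F V R) (L : List α) (hLM : F V (L ++ M) = F V L ++ F V M) :
    F V (L ++ M ++ R) = F V L ++ F V M ++ F V R := by
  by_cases hL : L = []
  · subst hL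
    simpa [F_nil] using hMR
  obtain ⟨hhead, htail⟩ := F_append_of_F_append hL hLM
  have hLM_ne : L ++ M ≠ [] := List.append_ne_nil_of_left_ne_nil hL M
  have hfirst : firstTok V (L ++ M ++ R) = firstTok V L := by
    rw [firstTok_append_of_length_le R hLM_ne
      (fun w hw => (hV w hw).trans (by simp)), hhead]
  -- `ht_pos` and `hL_pos` discharge the termination goal
  have ht_pos : 0 < (firstTok V L).length := List.length_pos_iff.mpr (firstTok_ne_nil_of_ne_nil hL)
  have hL_pos : 0 < L.length := List.length_pos_iff.mpr hL
  rw [F_of_ne_nil (List.append_ne_nil_of_left_ne_nil hLM_ne R), hfirst, List.append_assoc,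
    List.drop_append_of_le_length (firstTok_prefix V L).length_le, ← List.append_assoc,
    F_append_append hV hMR _ htail, F_of_ne_nil hL]
  simp
termination_by L.length

theorem lossless_overlap_merge_general (V : Finset (List α))
    (T : ℕ) (hT : T = V.sup List.length)
    (L M R : List α)
    (h1 : F V (L ++ M) = F V L ++ F V M)
    (h2 : F V (M ++ R) = F V M ++ F V R)
    (hM : T ≤ M.length) :
    F V (L ++ M ++ R) = F V L ++ F V M ++ F V R := by
  have hV : ∀ w ∈ V, w.length ≤ M.length := fun w hw =>
    (Finset.le_sup (f := List.length) hw).trans (hT ▸ hM)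
  exact F_append_append hV h2 L h1

/-- main appendix result: if `F (L ++ M) = F L ++ F M`,
`F (M ++ R) = F M ++ F R`, and the overlap `M` has length at least `T`
(the maximal length of a vocabulary word), then tokenizing `S = L ++ M ++ R`
gives `F L ++ F M ++ F R`. -/
theorem lossless_overlap_merge (V : Finset (List α))
    (hne : ∀ w ∈ V, w ≠ []) (hsingle : ∀ a : α, [a] ∈ V)
    (T : ℕ) (hT : T = V.sup List.length)
    (L M R : List α)
    (h1 : F V (L ++ M) = F V L ++ F V M)
    (h2 : F V (M ++ R) = F V M ++ F V R)
    (hM : T ≤ M.length) :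
    F V (L ++ M ++ R) = F V L ++ F V M ++ F V R :=
  lossless_overlap_merge_general V T hT L M R h1 h2 hM
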